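/- arXiv:1702.06177 — 2 statements merged into one kernel-verified Lean document; each statement's English description precedes it below -/
import Mathlib

section
/- If d > (α m / k₁) · (b e^{-μτ} μ + k₂(M - d/m)) / (b e^{-μτ} μ) and d/m < M, with all parameters α, m, k₁, k₂, b, μ, τ, d, M strictly positive, then α/k₁ < d·b e^{-μτ}μ / (m·b e^{-μτ}μ + k₂(mM - d)) < d/m < M. -/
theorem stmt_0 (α m k₁ k₂ b μ τ d M : ℝ)
    (hα : 0 < α) (hm : 0 < m) (hk₁ : 0 < k₁) (hk₂ : 0 < k₂) (hb : 0 < b)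
    (hμ : 0 < μ) (hτ : 0 < τ) (hd : 0 < d) (hM : 0 < M)
    (hdM : d / m < M)
    (hdose : d > (α * m / k₁) *
      (b * Real.exp (-μ * τ) * μ + k₂ * (M - d / m)) / (b * Real.exp (-μ * τ) * μ)) :
    α / k₁ < d * (b * Real.exp (-μ * τ) * μ) /
        (m * b * Real.exp (-μ * τ) * μ + k₂ * (m * M - d)) ∧
      d * (b * Real.exp (-μ * τ) * μ) /
        (m * b * Real.exp (-μ * τ) * μ + k₂ * (m * M - d)) < d / m ∧
      d / m < M := by
  set E := b * Real.exp (-μ * τ) * μ with hE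
  have hEpos : 0 < E := by positivity
  have hmMd : 0 < m * M - d := by
    have := (div_lt_iff₀ hm).mp hdM
    linarith [this]
  have hD : 0 < m * b * Real.exp (-μ * τ) * μ + k₂ * (m * M - d) := by
    nlinarith [mul_pos hm hEpos]
  have hmE : m * b * Real.exp (-μ * τ) * μ = m * E := by rw [hE]; ring
  rw [hmE] at hD
  have hdose' : α * (m * E + k₂ * (m * M - d)) < k₁ * (d * E) := by
    rw [gt_iff_lt, div_lt_iff₀ hEpos, div_mul_eq_mul_div, div_lt_iff₀ hk₁] at hdose
    have hmd : α * m * (E + k₂ * (M - d / m)) = α * (m * E + k₂ * (m * M - d)) := by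
      field_simp
    linarith [hdose, hmd.symm.trans_lt hdose]
  rw [hmE]
  refine ⟨?_, ?_, hdM⟩
  · rw [div_lt_div_iff₀ hk₁ hD]
    nlinarith
  · rw [div_lt_div_iff₀ hD hm]
    nlinarith [mul_pos hd (mul_pos hk₂ hmMd)]
end

section
/- (Invariant region, Step 3 case t₀ > τ.) Suppose S : [−τ,∞) → ℝ₊ is nonincreasing on [0,t₀], Q(t₀) = ν where ν = d·be^{-μτ}μ/(m·be^{-μτ}μ + k₂(mM−d)), Q(t₀−τ) > ν, I(t₀) ≤ (mM−d)/(be^{-μτ}μ), be^{-μτ} > 1, ν ≤ M (so σ(Q(t₀−τ)) ≥ ν if Q(t₀−τ) ≤ M, with σ nondecreasing and σ(x)=x on [0,M]). Then Q'(t₀) = d − mν − k₁νS(t₀) − k₂νI(t₀) + k₁be^{-μτ}σ(Q(t₀−τ))S(t₀−τ) satisfies Q'(t₀) ≥ k₁S(t₀)(be^{-μτ}σ(Q(t₀−τ)) − ν) > 0 when S(t₀) > 0, using d − mν − k₂ν(mM−d)/(be^{-μτ}μ) = 0. -/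
theorem stmt_13 (d m k₁ k₂ b μ τ M t₀ : ℝ)
    (hd : 0 < d) (hm : 0 < m) (hk₁ : 0 < k₁) (hk₂ : 0 < k₂) (hb : 0 < b)
    (hμ : 0 < μ) (hτ : 0 < τ) (hM : 0 < M) (hmMd : d < m * M)
    (ht₀ : t₀ > τ)
    (S Q I σ : ℝ → ℝ)
    (hSpos : ∀ t, 0 ≤ S t)
    (hSmono : AntitoneOn S (Set.Icc 0 t₀))
    (hσmono : Monotone σ)
    (hσid : ∀ x, 0 ≤ x → x ≤ M → σ x = x)
    (hbe : b * Real.exp (-μ * τ) > 1)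
    (hνM : d * (b * Real.exp (-μ * τ) * μ) /
        (m * (b * Real.exp (-μ * τ) * μ) + k₂ * (m * M - d)) ≤ M)
    (hQτ : Q (t₀ - τ) > d * (b * Real.exp (-μ * τ) * μ) /
        (m * (b * Real.exp (-μ * τ) * μ) + k₂ * (m * M - d)))
    (hI : I t₀ ≤ (m * M - d) / (b * Real.exp (-μ * τ) * μ))
    (hSt₀ : 0 < S t₀) :
    (d - m * (d * (b * Real.exp (-μ * τ) * μ) /
          (m * (b * Real.exp (-μ * τ) * μ) + k₂ * (m * M - d)))
      - k₁ * (d * (b * Real.exp (-μ * τ) * μ) /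
          (m * (b * Real.exp (-μ * τ) * μ) + k₂ * (m * M - d))) * S t₀
      - k₂ * (d * (b * Real.exp (-μ * τ) * μ) /
          (m * (b * Real.exp (-μ * τ) * μ) + k₂ * (m * M - d))) * I t₀
      + k₁ * b * Real.exp (-μ * τ) * σ (Q (t₀ - τ)) * S (t₀ - τ)) ≥
      k₁ * S t₀ * (b * Real.exp (-μ * τ) * σ (Q (t₀ - τ))
        - d * (b * Real.exp (-μ * τ) * μ) /
            (m * (b * Real.exp (-μ * τ) * μ) + k₂ * (m * M - d))) ∧
    0 < (d - m * (d * (b * Real.exp (-μ * τ) * μ) /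
          (m * (b * Real.exp (-μ * τ) * μ) + k₂ * (m * M - d)))
      - k₁ * (d * (b * Real.exp (-μ * τ) * μ) /
          (m * (b * Real.exp (-μ * τ) * μ) + k₂ * (m * M - d))) * S t₀
      - k₂ * (d * (b * Real.exp (-μ * τ) * μ) /
          (m * (b * Real.exp (-μ * τ) * μ) + k₂ * (m * M - d))) * I t₀
      + k₁ * b * Real.exp (-μ * τ) * σ (Q (t₀ - τ)) * S (t₀ - τ)) := by

  set E : ℝ := b * Real.exp (-μ * τ) with hE
  have hE1 : 1 < E := hbe
  have hE0 : 0 < E := lt_trans one_pos hE1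
  have hEμ : 0 < E * μ := mul_pos hE0 hμ
  have hDden : 0 < m * (E * μ) + k₂ * (m * M - d) :=
    add_pos (mul_pos hm hEμ) (mul_pos hk₂ (by linarith))
  set ν : ℝ := d * (E * μ) / (m * (E * μ) + k₂ * (m * M - d)) with hν
  have hν0 : 0 < ν := div_pos (mul_pos hd hEμ) hDden
  -- identity
  have hid : d - m * ν - k₂ * ν * ((m * M - d) / (E * μ)) = 0 := by
    rw [hν]
    simp only [div_eq_mul_inv]
    linear_combination (-d) * mul_inv_cancel₀ hDden.ne' - (k₂ * d * (m * (E * μ) + k₂ * (m * M - d))⁻¹ * (m * M - d)) * mul_inv_cancel₀ hEμ.ne'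
  -- σ(Q(t₀-τ)) ≥ ν
  have hQ0 : 0 < Q (t₀ - τ) := lt_trans hν0 hQτ
  have hσν : ν ≤ σ (Q (t₀ - τ)) := by
    by_cases hc : Q (t₀ - τ) ≤ M
    · rw [hσid _ hQ0.le hc]; exact hQτ.le
    · have : σ M ≤ σ (Q (t₀ - τ)) := hσmono (le_of_not_ge hc)
      rw [hσid M hM.le le_rfl] at this
      linarith
  have hσ0 : 0 < σ (Q (t₀ - τ)) := lt_of_lt_of_le hν0 hσν
  -- S monotone
  have hSS : S t₀ ≤ S (t₀ - τ) := by
    have h1 : (t₀ - τ) ∈ Set.Icc (0:ℝ) t₀ := ⟨by linarith, by linarith⟩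
    have h2 : t₀ ∈ Set.Icc (0:ℝ) t₀ := ⟨by linarith, le_rfl⟩
    exact hSmono h1 h2 (by linarith)
  -- d - mν - k₂ ν I ≥ 0
  have hI2 : k₂ * ν * I t₀ ≤ k₂ * ν * ((m * M - d) / (E * μ)) := by
    apply mul_le_mul_of_nonneg_left hI (by positivity)
  have hnonneg : 0 ≤ d - m * ν - k₂ * ν * I t₀ := by linarith
  have hterm : k₁ * E * σ (Q (t₀ - τ)) * S t₀ ≤ k₁ * E * σ (Q (t₀ - τ)) * S (t₀ - τ) := by
    apply mul_le_mul_of_nonneg_left hSS (by positivity)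
  have hkE : k₁ * b * Real.exp (-μ * τ) = k₁ * E := by rw [hE]; ring
  rw [hkE]
  constructor
  · linarith [hterm, hnonneg]
  · have hEσ : ν < E * σ (Q (t₀ - τ)) := by nlinarith
    have hpos : 0 < k₁ * S t₀ * (E * σ (Q (t₀ - τ)) - ν) := by
      apply mul_pos (mul_pos hk₁ hSt₀); linarith
    linarith [hterm, hnonneg]
end
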